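/- Let r ≥ 2, 0 < ρ < 1, and suppose n < ρ·log d / log r. If T is uniformly distributed on the set F^d of all labeled forests on d nodes, then for any estimator T̂ mapping n samples from ({1,...,r}^d)^n to F^d, the error probability satisfies P(T̂ ≠ T) > 1 - d²·exp((ρ-1)·d·log d). -/

import Mathlib

open Finset

/-- The set of all labeled forests on `d` nodes. -/
abbrev AllForests (d : ℕ) := {G : SimpleGraph (Fin d) // G.IsAcyclic}

noncomputable instance (d : ℕ) : Fintype (AllForests d) := Fintype.ofFinite _

noncomputable instance (d : ℕ) : DecidableEq (AllForests d) := Classical.decEq _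

/-
With a uniform prior on the forests, an estimator is correct on the sample `x` only if the true
forest is `f x`, which has probability at most `∑ₓ' p (f x) x' = 1 / |F^d|`. Summing over the
`r^(dn)` possible samples bounds the success probability by `r^(dn) / |F^d|`. Prüfer decoding
embeds the `d^(d-2)` codes of length `d - 2` into the forests, and `r^(dn) < d^(ρd)` by the
assumption on `n`; since `d^(ρd) / d^(d-2) = d² · d^((ρ-1)d)`, the bound follows.
-/

namespace SimpleGraph

variable {V : Type*} {G : SimpleGraph V}

theorem IsAcyclic.sup_edge_of_forall_not_adj (hG : G.IsAcyclic) {u v : V} (huv : u ≠ v)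
    (hu : ∀ w, ¬ G.Adj u w) : (G ⊔ edge u v).IsAcyclic :=
  hG.sup_edge_of_not_reachable fun ⟨p⟩ => by
    cases p with
    | nil => exact huv rfl
    | cons h _ => exact hu _ h

end SimpleGraph

namespace Prufer

open SimpleGraph

variable {α : Type*} {a t : List α} {b : α} {V : Finset α}

def IsCode (a : List α) (V : Finset α) : Prop :=
  (∀ x ∈ a, x ∈ V) ∧ #V = a.length + 2

theorem IsCode.length_eq {a' : List α} (h : IsCode a V) (h' : IsCode a' V) :
    a.length = a'.length := by
  have := h.2.symm.trans h'.2
  omega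

variable [LinearOrder α] [OrderTop α]

-- The least vertex of `V` outside `a`; `inf ∅ = ⊤` is a junk value that `IsCode` rules out.
def leaf (a : List α) (V : Finset α) : α := (V \ a.toFinset).inf id

-- Prüfer decoding: join the head of the code to the current leaf, remove the leaf, and
-- finally join the two remaining vertices.
def decode : List α → Finset α → SimpleGraph α
  | [], V => fromRel fun x y => x ∈ V ∧ y ∈ V
  | b :: t, V => decode t (V.erase (leaf (b :: t) V)) ⊔ edge (leaf (b :: t) V) b

theorem IsCode.leaf_mem (h : IsCode a V) : leaf a V ∈ V ∧ leaf a V ∉ a := by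
  have hne : (V \ a.toFinset).Nonempty := by
    rw [← card_pos]
    have := h.2
    have := a.toFinset_card_le
    have := le_card_sdiff a.toFinset V
    omega
  obtain ⟨x, hx, hleaf⟩ := exists_mem_eq_inf _ hne id
  rw [leaf, hleaf]
  simpa using hx

theorem IsCode.leaf_ne_head (h : IsCode (b :: t) V) : leaf (b :: t) V ≠ b :=
  fun hb => h.leaf_mem.2 (by rw [hb]; exact List.mem_cons_self)

theorem IsCode.tail (h : IsCode (b :: t) V) : IsCode t (V.erase (leaf (b :: t) V)) := by
  refine ⟨fun x hx => mem_erase.2 ⟨?_, h.1 x (List.mem_cons_of_mem _ hx)⟩, ?_⟩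
  · rintro rfl
    exact h.leaf_mem.2 (List.mem_cons_of_mem _ hx)
  · rw [card_erase_of_mem h.leaf_mem.1, h.2]
    simp

theorem IsCode.mem_of_decode_adj {x y : α} (h : IsCode a V) (hxy : (decode a V).Adj x y) :
    x ∈ V := by
  induction a generalizing V with
  | nil =>
    rw [decode, fromRel_adj] at hxy
    tauto
  | cons b t ih =>
    rcases hxy with hxy | hxy
    · exact mem_of_mem_erase (ih h.tail hxy)
    · rcases (edge_adj _ _ _ _).1 hxy with ⟨⟨rfl, -⟩ | ⟨rfl, -⟩, -⟩
      exacts [h.leaf_mem.1, h.1 _ List.mem_cons_self]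

theorem IsCode.decode_adj_leaf_head (h : IsCode (b :: t) V) :
    (decode (b :: t) V).Adj (leaf (b :: t) V) b :=
  Or.inr ((edge_adj _ _ _ _).2 ⟨.inl ⟨rfl, rfl⟩, h.leaf_ne_head⟩)

theorem IsCode.not_decode_tail_adj_leaf (h : IsCode (b :: t) V) (y : α) :
    ¬ (decode t (V.erase (leaf (b :: t) V))).Adj (leaf (b :: t) V) y :=
  fun hadj => notMem_erase _ _ (h.tail.mem_of_decode_adj hadj)

theorem IsCode.decode_tail_adj_iff (h : IsCode (b :: t) V) {x y : α} :
    (decode t (V.erase (leaf (b :: t) V))).Adj x y ↔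
      (decode (b :: t) V).Adj x y ∧ x ≠ leaf (b :: t) V ∧ y ≠ leaf (b :: t) V := by
  refine ⟨fun hxy => ⟨.inl hxy, ?_, ?_⟩, ?_⟩
  · rintro rfl
    exact h.not_decode_tail_adj_leaf y hxy
  · rintro rfl
    exact h.not_decode_tail_adj_leaf x hxy.symm
  · rintro ⟨hxy | hxy, hx, hy⟩
    · exact hxy
    · rcases (edge_adj _ _ _ _).1 hxy with ⟨⟨rfl, -⟩ | ⟨-, rfl⟩, -⟩
      exacts [absurd rfl hx, absurd rfl hy]

theorem decode_nil_pair {x y : α} :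
    decode [] {x, y} = ⊥ ⊔ edge x y := by
  ext u v
  simp only [decode, fromRel_adj, bot_sup_eq, edge_adj, mem_insert, mem_singleton]
  grind

theorem IsCode.isAcyclic_decode (h : IsCode a V) : (decode a V).IsAcyclic := by
  induction a generalizing V with
  | nil =>
    obtain ⟨x, y, hxy, rfl⟩ := card_eq_two.1 h.2
    rw [decode_nil_pair]
    exact isAcyclic_bot.sup_edge_of_forall_not_adj hxy fun _ => id
  | cons b t ih =>
    exact (ih h.tail).sup_edge_of_forall_not_adj h.leaf_ne_head h.not_decode_tail_adj_leaf

theorem IsCode.exists_decode_adj (h : IsCode a V) {v : α} (hv : v ∈ V) :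
    ∃ w, (decode a V).Adj v w := by
  induction a generalizing V with
  | nil =>
    obtain ⟨x, y, hxy, rfl⟩ := card_eq_two.1 h.2
    rw [decode_nil_pair, bot_sup_eq]
    rcases mem_insert.1 hv with rfl | hv
    · exact ⟨y, (edge_adj _ _ _ _).2 ⟨.inl ⟨rfl, rfl⟩, hxy⟩⟩
    · rw [mem_singleton.1 hv]
      exact ⟨x, (edge_adj _ _ _ _).2 ⟨.inr ⟨rfl, rfl⟩, hxy.symm⟩⟩
  | cons b t ih =>
    by_cases hvl : v = leaf (b :: t) V
    · exact ⟨b, hvl ▸ h.decode_adj_leaf_head⟩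
    · obtain ⟨w, hw⟩ := ih h.tail (mem_erase.2 ⟨hvl, hv⟩)
      exact ⟨w, Or.inl hw⟩

theorem IsCode.eq_of_decode_adj_of_notMem (h : IsCode a V) {v w w' : α} (hv : v ∉ a)
    (hw : (decode a V).Adj v w) (hw' : (decode a V).Adj v w') : w = w' := by
  induction a generalizing V with
  | nil =>
    obtain ⟨x, y, hxy, rfl⟩ := card_eq_two.1 h.2
    rw [decode_nil_pair, bot_sup_eq, edge_adj] at hw hw'
    grind
  | cons b t ih =>
    rw [List.mem_cons, not_or] at hv
    by_cases hvl : v = leaf (b :: t) V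
    · subst hvl
      have only_head : ∀ z, (decode (b :: t) V).Adj (leaf (b :: t) V) z → z = b := by
        rintro z (hz | hz)
        · exact absurd hz (h.not_decode_tail_adj_leaf z)
        · rw [edge_adj] at hz
          grind
      rw [only_head w hw, only_head w' hw']
    · have to_tail : ∀ z, (decode (b :: t) V).Adj v z →
          (decode t (V.erase (leaf (b :: t) V))).Adj v z := by
        rintro z (hz | hz)
        · exact hz
        · rw [edge_adj] at hz
          grind
      exact ih h.tail hv.2 (to_tail w hw) (to_tail w' hw')

theorem IsCode.exists_two_decode_adj_of_mem (h : IsCode a V) {v : α} (hv : v ∈ a) :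
    ∃ w w', w ≠ w' ∧ (decode a V).Adj v w ∧ (decode a V).Adj v w' := by
  induction a generalizing V with
  | nil => exact absurd hv List.not_mem_nil
  | cons b t ih =>
    rcases List.mem_cons.1 hv with rfl | hv
    · obtain ⟨w, hw⟩ :=
        h.tail.exists_decode_adj (mem_erase.2 ⟨h.leaf_ne_head.symm, h.1 _ hv⟩)
      refine ⟨w, leaf (v :: t) V, ?_, .inl hw, h.decode_adj_leaf_head.symm⟩
      rintro rfl
      exact h.not_decode_tail_adj_leaf v hw.symm
    · obtain ⟨w, w', hww', hw, hw'⟩ := ih h.tail hv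
      exact ⟨w, w', hww', .inl hw, .inl hw'⟩

theorem IsCode.mem_iff_exists_two_decode_adj (h : IsCode a V) {v : α} :
    v ∈ a ↔ ∃ w w', w ≠ w' ∧ (decode a V).Adj v w ∧ (decode a V).Adj v w' := by
  refine ⟨h.exists_two_decode_adj_of_mem, fun ⟨w, w', hww', hw, hw'⟩ => ?_⟩
  by_contra hv
  exact hww' (h.eq_of_decode_adj_of_notMem hv hw hw')

-- Code entries are the vertices with two distinct neighbours, so the graph determines the first
-- leaf, the head as that leaf's unique neighbour, and the decoded tail.
theorem IsCode.decode_injective {a' : List α} (h : IsCode a V) (h' : IsCode a' V)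
    (heq : decode a V = decode a' V) : a = a' := by
  induction a generalizing a' V with
  | nil =>
    cases a' with
    | nil => rfl
    | cons => simpa using h.length_eq h'
  | cons b t ih =>
    cases a' with
    | nil => simpa using h.length_eq h'
    | cons b' t' =>
      have hleaf : leaf (b :: t) V = leaf (b' :: t') V := by
        have : (b :: t).toFinset = (b' :: t').toFinset := by
          ext v
          rw [List.mem_toFinset, List.mem_toFinset, h.mem_iff_exists_two_decode_adj,
            h'.mem_iff_exists_two_decode_adj, heq]
        rw [leaf, leaf, this]
      have hb : b = b' := h.eq_of_decode_adj_of_notMem h.leaf_mem.2 h.decode_adj_leaf_head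
        (by rw [heq, hleaf]; exact h'.decode_adj_leaf_head)
      subst hb
      have htail :
          decode t (V.erase (leaf (b :: t) V)) = decode t' (V.erase (leaf (b :: t) V)) := by
        ext x y
        rw [h.decode_tail_adj_iff, hleaf, h'.decode_tail_adj_iff, heq]
      rw [ih h.tail (hleaf ▸ h'.tail) htail]

end Prufer

theorem SimpleGraph.card_pow_card_sub_two_le_card_isAcyclic {α : Type*} [Fintype α]
    [LinearOrder α] [OrderTop α] (hα : 2 ≤ Fintype.card α) :
    Fintype.card α ^ (Fintype.card α - 2) ≤ Nat.card {G : SimpleGraph α // G.IsAcyclic} := by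
  have hcode (g : Fin (Fintype.card α - 2) → α) : Prufer.IsCode (List.ofFn g) univ :=
    ⟨fun x _ => mem_univ x, by rw [card_univ, List.length_ofFn]; omega⟩
  have := Nat.card_le_card_of_injective
    (fun g => (⟨Prufer.decode (List.ofFn g) univ, (hcode g).isAcyclic_decode⟩ :
      {G : SimpleGraph α // G.IsAcyclic}))
    fun g g' hgg' => List.ofFn_injective <|
      (hcode g).decode_injective (hcode g') (congrArg Subtype.val hgg')
  simpa using this

theorem one_sub_card_div_card_le_sum_ite_ne {Θ X : Type*} [Fintype Θ] [Nonempty Θ]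
    [DecidableEq Θ] [Fintype X] (p : Θ → X → ℝ) (hp : ∀ t x, 0 ≤ p t x)
    (hmarg : ∀ t, ∑ x, p t x = 1 / Fintype.card Θ) (f : X → Θ) :
    1 - (Fintype.card X : ℝ) / Fintype.card Θ ≤
      ∑ t, ∑ x, if f x ≠ t then p t x else 0 := by
  have hsuccess : ∑ x, p (f x) x ≤ (Fintype.card X : ℝ) / Fintype.card Θ :=
    calc ∑ x, p (f x) x ≤ ∑ _x : X, 1 / (Fintype.card Θ : ℝ) :=
          sum_le_sum fun x _ => hmarg (f x) ▸ single_le_sum (fun y _ => hp (f x) y) (mem_univ x)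
      _ = (Fintype.card X : ℝ) / Fintype.card Θ := by simp [div_eq_mul_inv]
  have herror : ∑ t, ∑ x, (if f x ≠ t then p t x else 0) = 1 - ∑ x, p (f x) x := by
    have hsplit (t : Θ) (x : X) :
        (if f x ≠ t then p t x else 0) = p t x - if f x = t then p t x else 0 := by
      split_ifs <;> simp_all
    simp_rw [hsplit, sum_sub_distrib, hmarg, sum_comm (γ := Θ), sum_ite_eq, if_pos (mem_univ _)]
    simp
  linarith

theorem natCast_pow_lt_exp {d n r : ℕ} {ρ : ℝ} (hr : 2 ≤ r) (hd : 0 < d)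
    (hn : (n : ℝ) < ρ * Real.log d / Real.log r) :
    (r : ℝ) ^ (d * n) < Real.exp (ρ * d * Real.log d) := by
  have hlogr : 0 < Real.log r := Real.log_pos (by exact_mod_cast hr)
  have hnr : n * Real.log r < ρ * Real.log d := (lt_div_iff₀ hlogr).1 hn
  rw [← Real.exp_log (by positivity : (0 : ℝ) < r), ← Real.exp_nat_mul, Real.exp_lt_exp]
  push_cast
  nlinarith [(Nat.cast_pos (α := ℝ)).2 hd]

theorem natCast_pow_sub_two_mul_exp {d : ℕ} (hd : 2 ≤ d) (ρ : ℝ) :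
    (d : ℝ) ^ (d - 2) * ((d : ℝ) ^ 2 * Real.exp ((ρ - 1) * d * Real.log d)) =
      Real.exp (ρ * d * Real.log d) := by
  rw [← mul_assoc, ← pow_add, Nat.sub_add_cancel hd,
    ← Real.exp_log (by positivity : (0 : ℝ) < d), ← Real.exp_nat_mul, ← Real.exp_add,
    Real.exp_log (by positivity)]
  ring_nf

theorem sample_complexity_lower_bound_all_forests_general
    (d n r : ℕ) (hr : 2 ≤ r) (hd : 2 ≤ d)
    (ρ : ℝ)
    (hn : (n : ℝ) < ρ * Real.log d / Real.log r)
    (p : AllForests d → (Fin n → Fin d → Fin r) → ℝ)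
    (hp : ∀ t x, 0 ≤ p t x)
    (hmarg : ∀ t, ∑ x : Fin n → Fin d → Fin r, p t x = 1 / Fintype.card (AllForests d))
    (f : (Fin n → Fin d → Fin r) → AllForests d) :
    1 - (d : ℝ) ^ 2 * Real.exp ((ρ - 1) * (d : ℝ) * Real.log d) <
      ∑ t : AllForests d, ∑ x : Fin n → Fin d → Fin r, if f x ≠ t then p t x else 0 := by
  have : NeZero d := ⟨by omega⟩
  have : Nonempty (AllForests d) := ⟨⟨⊥, SimpleGraph.isAcyclic_bot⟩⟩
  have hforests : (d : ℝ) ^ (d - 2) ≤ Fintype.card (AllForests d) := by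
    have := SimpleGraph.card_pow_card_sub_two_le_card_isAcyclic (α := Fin d) (by simpa using hd)
    rw [Fintype.card_fin, Nat.card_eq_fintype_card] at this
    exact_mod_cast this
  have hsuccess : (Fintype.card (Fin n → Fin d → Fin r) : ℝ) / Fintype.card (AllForests d) <
      (d : ℝ) ^ 2 * Real.exp ((ρ - 1) * d * Real.log d) := by
    rw [div_lt_iff₀' (by positivity)]
    calc (Fintype.card (Fin n → Fin d → Fin r) : ℝ) = (r : ℝ) ^ (d * n) := by simp [pow_mul]
      _ < Real.exp (ρ * d * Real.log d) := natCast_pow_lt_exp hr (by omega) hn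
      _ = (d : ℝ) ^ (d - 2) * ((d : ℝ) ^ 2 * Real.exp ((ρ - 1) * d * Real.log d)) :=
          (natCast_pow_sub_two_mul_exp hd ρ).symm
      _ ≤ _ := by gcongr
  linarith [one_sub_card_div_card_le_sum_ite_ne p hp hmarg f]

/-- Lower bound on sample complexity, case (b): if the true forest `T` is uniform on the
set `F^d` of all labeled forests on `d` nodes, samples take values in `X^d` with `|X| = r`,
and `n < ρ·log d / log r` with `ρ < 1`, then any estimator `f : (X^d)^n → F^d` has error
probability exceeding `1 - d²·exp((ρ-1)·d·log d)`. -/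
theorem sample_complexity_lower_bound_all_forests
    (d n r : ℕ) (hr : 2 ≤ r) (hd : 2 ≤ d)
    (ρ : ℝ) (hρ0 : 0 < ρ) (hρ1 : ρ < 1)
    (hn : (n : ℝ) < ρ * Real.log d / Real.log r)
    (p : AllForests d → (Fin n → Fin d → Fin r) → ℝ)
    (hp : ∀ t x, 0 ≤ p t x)
    (hmarg : ∀ t, ∑ x : Fin n → Fin d → Fin r, p t x = 1 / Fintype.card (AllForests d))
    (f : (Fin n → Fin d → Fin r) → AllForests d) :
    1 - (d : ℝ) ^ 2 * Real.exp ((ρ - 1) * (d : ℝ) * Real.log d) <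
      ∑ t : AllForests d, ∑ x : Fin n → Fin d → Fin r, if f x ≠ t then p t x else 0 :=
  sample_complexity_lower_bound_all_forests_general d n r hr hd ρ hn p hp hmarg f
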